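/- Let v : 𝒫^n → Δ(C) be an anonymous randomized voting rule that is weakly strategy-proof and satisfies ε-super-weak unanimity. Then v satisfies ε-strong unanimity: for every candidate x ∈ C and every profile P⃗ = (P_1,…,P_n) with top(P_i) = x for every i ∈ [n], v(x,P⃗) ≥ 1 − ε. -/

import Mathlib

open Finset

section VotingPrelims

variable (C : Type) [Fintype C] [DecidableEq C]

/-- A preference ordering over the subset `A` of candidates: a duplicate-free list
enumerating exactly the members of `A`, where earlier entries are more preferred. -/
def PrefOn (A : Finset C) : Type :=
  {l : List C // l.Nodup ∧ l.toFinset = A}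

/-- A (full) preference ordering on the whole candidate set. -/
abbrev Pref : Type := PrefOn C Finset.univ

variable {C}

noncomputable instance instFintypePrefOn (A : Finset C) : Fintype (PrefOn C A) :=
  Fintype.subtype A.toList.permutations.toFinset (by
    intro l
    rw [List.mem_toFinset, List.mem_permutations]
    constructor
    · intro h
      exact ⟨h.nodup_iff.mpr A.nodup_toList,
        by rw [List.toFinset_eq_of_perm _ _ h, Finset.toList_toFinset]⟩
    · rintro ⟨h1, h2⟩
      exact List.perm_of_nodup_nodup_toFinset_eq h1 A.nodup_toList
        (by rw [h2, Finset.toList_toFinset]))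

instance instDecidableEqPrefOn (A : Finset C) : DecidableEq (PrefOn C A) := fun P Q =>
  decidable_of_iff (P.1 = Q.1) Subtype.ext_iff.symm

/-- `P.pref x y` means that `x` is strictly preferred to `y` in `P`. -/
def PrefOn.pref {A : Finset C} (P : PrefOn C A) (x y : C) : Prop :=
  P.1.idxOf x < P.1.idxOf y

theorem Pref.mem_list (P : Pref C) (z : C) : z ∈ P.1 := by
  rw [← List.mem_toFinset, P.2.2]; exact Finset.mem_univ z

/-- The top (most preferred) candidate of a full preference ordering. -/
noncomputable def Pref.top [Nonempty C] (P : Pref C) : C :=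
  P.1.head?.getD (Classical.arbitrary C)

/-- The most preferred candidate of `S` according to the full preference `P`. -/
noncomputable def Pref.topOn [Nonempty C] (P : Pref C) (S : Finset C) : C :=
  (P.1.filter (fun z => decide (z ∈ S))).head?.getD (Classical.arbitrary C)

/-- The number of voters whose top choice is `x`. -/
noncomputable def topCount [Nonempty C] {n : ℕ} (P : Fin n → Pref C) (x : C) : ℕ :=
  (Finset.univ.filter fun i => (P i).top = x).card

/-- The number of voters whose most preferred candidate among `S` is `x`. -/
noncomputable def countTop [Nonempty C] {n : ℕ} (P : Fin n → Pref C) (S : Finset C)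
    (x : C) : ℕ :=
  (Finset.univ.filter fun i => (P i).topOn S = x).card

/-- The restriction of a full preference ordering to the subset `A`. -/
def Pref.restrictTo (P : Pref C) (A : Finset C) : PrefOn C A :=
  ⟨P.1.filter (fun z => decide (z ∈ A)), P.2.1.filter _, by
    ext z
    simp only [List.mem_toFinset, List.mem_filter, decide_eq_true_eq]
    exact ⟨fun h => h.2, fun h => ⟨Pref.mem_list P z, h⟩⟩⟩

/-- `d` is a probability distribution on the candidates. -/
def IsDist (d : C → ℝ) : Prop :=
  (∀ x, 0 ≤ d x) ∧ ∑ x, d x = 1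

/-- `d` is a probability distribution on the candidates, supported on `A`. -/
def IsDistOn (A : Finset C) (d : C → ℝ) : Prop :=
  IsDist d ∧ ∀ x ∉ A, d x = 0

/-- `v` is a (randomized) voting rule: it maps every profile to a distribution. -/
def IsVotingRule {A : Finset C} {n : ℕ} (v : (Fin n → PrefOn C A) → C → ℝ) : Prop :=
  ∀ P, IsDist (v P)

/-- `φ` is a belief, i.e. a probability distribution over preference orderings. -/
def IsBelief {A : Finset C} (φ : PrefOn C A → ℝ) : Prop :=
  (∀ P, 0 ≤ φ P) ∧ ∑ P, φ P = 1

/-- Anonymity: permuting the voters does not change the outcome distribution. -/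
def Anonymous {A : Finset C} {n : ℕ} (v : (Fin n → PrefOn C A) → C → ℝ) : Prop :=
  ∀ σ : Equiv.Perm (Fin n), ∀ P : Fin n → PrefOn C A, v (fun i => P (σ i)) = v P

/-- Utilities take values in `[0,1]`. -/
def Utility01 (u : C → ℝ) : Prop := ∀ x, 0 ≤ u x ∧ u x ≤ 1

/-- The utility function `u` is consistent with the preference ordering `P` on `A`. -/
def ConsistentOn (A : Finset C) (u : C → ℝ) (P : PrefOn C A) : Prop :=
  ∀ x ∈ A, ∀ y ∈ A, (u y < u x ↔ P.pref x y)

/-- The profile in which voter `i` reports `Pi` and the remaining voters report `R`. -/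
def combine {A : Finset C} {n : ℕ} (i : Fin n) (Pi : PrefOn C A)
    (R : {j : Fin n // j ≠ i} → PrefOn C A) : Fin n → PrefOn C A :=
  fun j => if h : j = i then Pi else R ⟨j, h⟩

/-- The expected utility of voter `i` when reporting `Pi`, where the remaining `n-1`
voters' preferences are drawn i.i.d. from the belief `φ`. -/
noncomputable def EU {A : Finset C} {n : ℕ} (v : (Fin n → PrefOn C A) → C → ℝ)
    (u : C → ℝ) (φ : PrefOn C A → ℝ) (i : Fin n) (Pi : PrefOn C A) : ℝ :=
  ∑ R : {j : Fin n // j ≠ i} → PrefOn C A,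
    (∏ j, φ (R j)) * ∑ x, v (combine i Pi R) x * u x

/-- Strategy-proofness with respect to a set `Φ` of (i.i.d.) beliefs. -/
def SPwrt {A : Finset C} {n : ℕ} (v : (Fin n → PrefOn C A) → C → ℝ)
    (Φ : Set (PrefOn C A → ℝ)) : Prop :=
  ∀ i : Fin n, ∀ Pi Pi' : PrefOn C A, ∀ φ ∈ Φ, IsBelief φ →
    ∀ u : C → ℝ, Utility01 u → ConsistentOn A u Pi →
      EU v u φ i Pi' ≤ EU v u φ i Pi

/-- Weak strategy-proofness: strategy-proofness w.r.t. all (i.i.d.) beliefs. -/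
def WeaklySP {n : ℕ} (v : (Fin n → Pref C) → C → ℝ) : Prop :=
  SPwrt v Set.univ

/-- `ε`-super-weak unanimity. -/
def SuperWeakUnanimity [Nonempty C] {n : ℕ} (v : (Fin n → Pref C) → C → ℝ) (ε : ℝ) : Prop :=
  ∀ x : C, ∃ P : Fin n → Pref C, (∀ i, (P i).top = x) ∧ 1 - ε ≤ v P x

/-- `ε`-strong unanimity. -/
def StrongUnanimity [Nonempty C] {n : ℕ} (v : (Fin n → Pref C) → C → ℝ) (ε : ℝ) : Prop :=
  ∀ x : C, ∀ P : Fin n → Pref C, (∀ i, (P i).top = x) → 1 - ε ≤ v P x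

/-- `ε`-Pareto efficiency. -/
def ParetoEff {n : ℕ} (v : (Fin n → Pref C) → C → ℝ) (ε : ℝ) : Prop :=
  ∀ x y : C, ∀ P : Fin n → Pref C, (∀ i, (P i).pref x y) → v P y ≤ ε

/-- An `α`-coarse belief: all probabilities are integer multiples of some `β ≥ α`. -/
def CoarseBelief {A : Finset C} (α : ℝ) (φ : PrefOn C A → ℝ) : Prop :=
  ∃ β : ℝ, α ≤ β ∧ ∀ P, ∃ k : ℤ, φ P = k * β

/-- An `α`-coarse utility function: any two utilities are equal or at least `α` apart. -/
def CoarseUtility (α : ℝ) (u : C → ℝ) : Prop :=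
  ∀ x y : C, u x = u y ∨ α ≤ |u x - u y|

/-- Large-scale `ε`-strategy-proofness w.r.t. coarse i.i.d. beliefs, with rate `p`. -/
def LargeScaleSP (v : (n : ℕ) → (Fin n → Pref C) → C → ℝ) (ε : ℕ → ℝ) (p : ℝ → ℝ) : Prop :=
  ∀ α : ℝ, 0 < α → ∀ n : ℕ, p (1 / α) ≤ (n : ℝ) →
    ∀ i : Fin n, ∀ Pi Pi' : Pref C, ∀ φ : Pref C → ℝ, IsBelief φ → CoarseBelief α φ →
      ∀ u : C → ℝ, Utility01 u → CoarseUtility α u → ConsistentOn Finset.univ u Pi →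
        EU (v n) u φ i Pi' - ε n ≤ EU (v n) u φ i Pi

/-- The restriction of a belief to the candidate subset `A`. -/
noncomputable def beliefRestrict (φ : Pref C → ℝ) (A : Finset C) : PrefOn C A → ℝ :=
  fun Q => ∑ P : Pref C, if P.restrictTo A = Q then φ P else 0

/-- The punishing voting rule: choose a uniform voter, then her `j`-th ranked candidate
with probability proportional to `m - j`. -/
noncomputable def vPunish (n : ℕ) (P : Fin n → Pref C) (x : C) : ℝ :=
  (1 / (n : ℝ)) * ∑ i : Fin n,
    (((Fintype.card C : ℝ) - ((P i).1.idxOf x + 1)) /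
      (∑ ℓ ∈ Finset.range (Fintype.card C), ((Fintype.card C : ℝ) - ((ℓ : ℝ) + 1))))

end VotingPrelims

section MorePrelims

variable {C : Type} [Fintype C] [DecidableEq C]

/-- `x` is directly above `y` in the preference ordering `P`. -/
def DirectlyAbove (P : Pref C) (x y : C) : Prop :=
  P.pref x y ∧ ∀ z : C, z ≠ x → z ≠ y → (P.pref z x ↔ P.pref z y)

/-- The preference obtained from `P` by exchanging the positions of `x` and `y`. -/
def Pref.swapC (P : Pref C) (x y : C) : Pref C :=
  ⟨P.1.map (Equiv.swap x y), P.2.1.map (Equiv.injective _), by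
    apply Finset.eq_univ_iff_forall.mpr
    intro z
    rw [List.mem_toFinset, List.mem_map]
    exact ⟨Equiv.swap x y z, Pref.mem_list P _, Equiv.swap_apply_self x y z⟩⟩

/-- Pairwise responsiveness. -/
def PairwiseResponsive {n : ℕ} (v : (Fin n → Pref C) → C → ℝ) : Prop :=
  ∀ P : Fin n → Pref C, ∀ i : Fin n, ∀ x y : C, DirectlyAbove (P i) x y →
    ∀ z : C, z ≠ x → z ≠ y →
      v (Function.update P i ((P i).swapC x y)) z = v P z

/-- Pairwise isolation. -/
def PairwiseIsolated {n : ℕ} (v : (Fin n → Pref C) → C → ℝ) : Prop :=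
  ∀ x y : C, ∀ i : Fin n, ∀ P P' : Fin n → Pref C,
    DirectlyAbove (P i) x y → P' i = P i →
    (∀ j : Fin n, (P j).pref x y ↔ (P' j).pref x y) →
      v (Function.update P' i ((P' i).swapC x y)) y - v P' y
        = v (Function.update P i ((P i).swapC x y)) y - v P y

/-- The ordering that puts `x` on top, with the rest ordered as in `a`. -/
def prefTopList (a : Pref C) (x : C) : Pref C :=
  ⟨x :: a.1.erase x, by
    rw [List.nodup_cons]
    exact ⟨a.2.1.not_mem_erase, a.2.1.erase x⟩, by
    apply Finset.eq_univ_iff_forall.mpr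
    intro z
    rw [List.mem_toFinset, List.mem_cons]
    by_cases hz : z = x
    · exact Or.inl hz
    · exact Or.inr ((List.mem_erase_of_ne hz).mpr (Pref.mem_list a z))⟩

/-- The ordering `a` with `x` moved to the bottom. -/
def prefBotList (a : Pref C) (x : C) : Pref C :=
  ⟨a.1.erase x ++ [x], by
    rw [List.nodup_append]
    exact ⟨a.2.1.erase x, List.nodup_singleton x,
      fun z hz y hy hzy => absurd hz (by
        rw [hzy, List.mem_singleton.mp hy]; exact a.2.1.not_mem_erase)⟩, by
    apply Finset.eq_univ_iff_forall.mpr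
    intro z
    rw [List.mem_toFinset, List.mem_append, List.mem_singleton]
    by_cases hz : z = x
    · exact Or.inr hz
    · exact Or.inl ((List.mem_erase_of_ne hz).mpr (Pref.mem_list a z))⟩

/-- The profile `P⃗^{x,j}`: the first `j` voters rank `x` first followed by the remaining
candidates in the order `a`; the remaining voters use `a` with `x` moved to the bottom. -/
def profileXJ (a : Pref C) (x : C) (j : ℕ) (n : ℕ) : Fin n → Pref C :=
  fun i => if (i : ℕ) < j then prefTopList a x else prefBotList a x

/-- `v'(x,j)`: the selection probability of `x` on the profile `P⃗^{x,j}`. -/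
def vPrime {n : ℕ} (v : (Fin n → Pref C) → C → ℝ) (a : Pref C) (x : C) (j : ℕ) : ℝ :=
  v (profileXJ a x j n) x

/-- One round of repeated-plurality elimination with margin `T`: keep exactly the
candidates of `S` whose top-choice count is within `T` of the highest count. -/
noncomputable def plStep [Nonempty C] {n : ℕ} (P : Fin n → Pref C) (T : ℝ) (S : Finset C) :
    Finset C :=
  S.filter (fun x => ((S.sup (countTop P S) : ℕ) : ℝ) ≤ (countTop P S x : ℝ) + T)

/-- The set of remaining candidates after repeated-plurality elimination. -/
noncomputable def plFinal [Nonempty C] {n : ℕ} (P : Fin n → Pref C) (T : ℝ) : Finset C :=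
  (fun S => plStep P T S)^[Fintype.card C] Finset.univ

/-- The plurality winner among `S`, with ties broken by `tb`. -/
noncomputable def pluralityWinner [Nonempty C] {n : ℕ} (tb : Finset C → C)
    (P : Fin n → Pref C) (S : Finset C) : C :=
  tb (S.filter (fun x => countTop P S x = S.sup (countTop P S)))

/-- Repeated Plurality Elimination + Plurality Selection. -/
noncomputable def vPl [Nonempty C] (δ : ℝ) (tb : Finset C → C) (n : ℕ)
    (P : Fin n → Pref C) (x : C) : ℝ :=
  if x = pluralityWinner tb P (plFinal P ((n : ℝ) ^ ((1 : ℝ) / 2 + δ))) then 1 else 0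

/-- One round of approximate instant-runoff elimination with margin `T`: eliminate the
candidates of `S` whose top-choice count is within `T` of the least count, unless this
would eliminate everyone. -/
noncomputable def irvStep [Nonempty C] {n : ℕ} (P : Fin n → Pref C) (T : ℝ) (S : Finset C) :
    Finset C :=
  if h : S.Nonempty then
    let E := S.filter (fun x =>
      (countTop P S x : ℝ) ≤ (((S.image (countTop P S)).min' (h.image _) : ℕ) : ℝ) + T)
    if E = S then S else S \ E
  else S

/-- The set of remaining candidates after approximate instant-runoff elimination. -/
noncomputable def irvFinal [Nonempty C] {n : ℕ} (P : Fin n → Pref C) (T : ℝ) : Finset C :=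
  (fun S => irvStep P T S)^[Fintype.card C] Finset.univ

/-- Approximate Instant-Runoff Voting. -/
noncomputable def vIrv [Nonempty C] (δ : ℝ) (tb : Finset C → C) (n : ℕ)
    (P : Fin n → Pref C) (x : C) : ℝ :=
  if x = pluralityWinner tb P (irvFinal P ((n : ℝ) ^ ((1 : ℝ) / 2 + δ))) then 1 else 0

/-- The position (0-indexed rank) of candidate `x` in the ordering `P`. -/
def Pref.rank (P : Pref C) (x : C) : Fin (Fintype.card C) :=
  ⟨P.1.idxOf x, by
    have hx : x ∈ P.1 := Pref.mem_list P x
    have hlen : P.1.length = Fintype.card C := by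
      rw [← List.toFinset_card_of_nodup P.2.1, P.2.2, Finset.card_univ]
    rw [← hlen]
    exact List.idxOf_lt_length_iff.mpr hx⟩

/-- The score of candidate `x` under the positional scoring rule with points vector `pv`. -/
def scoreOf (pv : Fin (Fintype.card C) → ℕ) {n : ℕ} (P : Fin n → Pref C) (x : C) : ℕ :=
  ∑ i : Fin n, pv ((P i).rank x)

/-- Scoring Rule Elimination + Input-Independent Selection. -/
noncomputable def vScore (δ : ℝ) (pv : Fin (Fintype.card C) → ℕ) (sel : Finset C → C → ℝ)
    (n : ℕ) (P : Fin n → Pref C) (x : C) : ℝ :=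
  sel (Finset.univ.filter (fun y =>
    ((Finset.univ.sup (scoreOf pv P) : ℕ) : ℝ) ≤ (scoreOf pv P y : ℝ) + (n : ℝ) ^ ((1 : ℝ) / 2 + δ))) x

end MorePrelims

/-!
Fix a voter and the reports of the others. If `P` and `Q` both rank `x` first, then `x` wins
with the same probability whether the voter reports `P` or `Q`; replacing the voters' reports
one at a time, starting from a profile that witnesses super-weak unanimity, then gives strong
unanimity.

For the first claim take the utility `η ^ rank` with `η` small: strategy-proofness says that
under every i.i.d. belief about the others, reporting `P` (or `Q`) maximizes the probability
that `x` wins, so both reports give `x` the same expected winning probability. Hence the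
difference `c` of the two outcomes, as a function of the others' reports, has zero expectation
under every i.i.d. distribution. By anonymity `c` is symmetric, so this expectation is a
polynomial in the belief whose coefficients are positive multiples of the values of `c`; it
vanishes on the simplex, hence by homogeneity on the positive orthant, hence identically.
-/

section Distributions

variable {C : Type} [Fintype C]

theorem IsDist.apply_le_sum_mul {d u : C → ℝ} (hd : IsDist d) {x : C} (hux : u x = 1)
    (hu : ∀ y, 0 ≤ u y) : d x ≤ ∑ y, d y * u y := by
  simpa [hux] using Finset.single_le_sum (fun y _ => mul_nonneg (hd.1 y) (hu y))
    (Finset.mem_univ x)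

theorem IsDist.sum_mul_le {d u : C → ℝ} (hd : IsDist d) {x : C} {η : ℝ} (hη : 0 ≤ η)
    (hux : u x = 1) (hu : ∀ y ≠ x, u y ≤ η) : ∑ y, d y * u y ≤ d x + η := by
  classical
  calc ∑ y, d y * u y ≤ ∑ y, ((if y = x then d y else 0) + d y * η) := by
        refine Finset.sum_le_sum fun y _ => ?_
        by_cases hy : y = x
        · simp [hy, hux, mul_nonneg (hd.1 x) hη]
        · simpa [hy] using mul_le_mul_of_nonneg_left (hu y hy) (hd.1 y)
    _ = d x + η := by rw [Finset.sum_add_distrib, ← Finset.sum_mul, hd.2]; simp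

theorem sum_prod_eq_one {ι α : Type*} [Fintype ι] [DecidableEq ι] [Fintype α] {φ : α → ℝ}
    (hφ : ∑ a, φ a = 1) : ∑ R : ι → α, ∏ j, φ (R j) = 1 := by
  rw [← Fintype.prod_sum (fun _ a => φ a), hφ, Finset.prod_const_one]

end Distributions

section GeomUtility

variable {C : Type} [Fintype C] [DecidableEq C]

instance Pref.instNonempty : Nonempty (Pref C) :=
  ⟨⟨Finset.univ.toList, Finset.nodup_toList _, Finset.toList_toFinset _⟩⟩

theorem Pref.idxOf_eq_zero_iff [Nonempty C] (P : Pref C) (y : C) :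
    P.1.idxOf y = 0 ↔ P.top = y := by
  obtain ⟨a, l, hl⟩ := List.exists_cons_of_ne_nil (List.ne_nil_of_mem (P.mem_list y))
  simp [Pref.top, hl, List.idxOf_cons, cond_eq_ite]

def Pref.geomUtility (P : Pref C) (η : ℝ) (y : C) : ℝ :=
  η ^ P.1.idxOf y

theorem Pref.consistentOn_geomUtility (P : Pref C) {η : ℝ} (h₀ : 0 < η) (h₁ : η < 1) :
    ConsistentOn Finset.univ (P.geomUtility η) P :=
  fun _ _ _ _ => pow_lt_pow_iff_right_of_lt_one₀ h₀ h₁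

theorem Pref.utility01_geomUtility (P : Pref C) {η : ℝ} (h₀ : 0 ≤ η) (h₁ : η ≤ 1) :
    Utility01 (P.geomUtility η) :=
  fun _ => ⟨pow_nonneg h₀ _, pow_le_one₀ h₀ h₁⟩

theorem Pref.geomUtility_top [Nonempty C] (P : Pref C) (η : ℝ) :
    P.geomUtility η P.top = 1 := by
  rw [Pref.geomUtility, (P.idxOf_eq_zero_iff _).2 rfl, pow_zero]

theorem Pref.geomUtility_le [Nonempty C] (P : Pref C) {η : ℝ} (h₀ : 0 ≤ η) (h₁ : η ≤ 1)
    {y : C} (hy : P.top ≠ y) : P.geomUtility η y ≤ η :=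
  pow_le_of_le_one h₀ h₁ (mt (P.idxOf_eq_zero_iff y).1 hy)

end GeomUtility

section WinProb

variable {C : Type} [Fintype C] [DecidableEq C] {n : ℕ}

noncomputable def winProb (v : (Fin n → Pref C) → C → ℝ) (φ : Pref C → ℝ) (i : Fin n)
    (Q : Pref C) (x : C) : ℝ :=
  ∑ R : {j : Fin n // j ≠ i} → Pref C, (∏ j, φ (R j)) * v (combine i Q R) x

variable {v : (Fin n → Pref C) → C → ℝ} {φ : Pref C → ℝ} {u : C → ℝ} {x : C}

theorem winProb_le_EU (hv : IsVotingRule v) (hφ : IsBelief φ) (hux : u x = 1)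
    (hu : ∀ y, 0 ≤ u y) (i : Fin n) (Q : Pref C) : winProb v φ i Q x ≤ EU v u φ i Q :=
  Finset.sum_le_sum fun _ _ => mul_le_mul_of_nonneg_left ((hv _).apply_le_sum_mul hux hu)
    (Finset.prod_nonneg fun _ _ => hφ.1 _)

theorem EU_le_winProb_add (hv : IsVotingRule v) (hφ : IsBelief φ) {η : ℝ} (hη : 0 ≤ η)
    (hux : u x = 1) (hu : ∀ y ≠ x, u y ≤ η) (i : Fin n) (Q : Pref C) :
    EU v u φ i Q ≤ winProb v φ i Q x + η :=
  calc EU v u φ i Q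
      ≤ ∑ R : {j : Fin n // j ≠ i} → Pref C, (∏ j, φ (R j)) * (v (combine i Q R) x + η) :=
        Finset.sum_le_sum fun _ _ => mul_le_mul_of_nonneg_left ((hv _).sum_mul_le hη hux hu)
          (Finset.prod_nonneg fun _ _ => hφ.1 _)
    _ = winProb v φ i Q x + η := by
        simp only [mul_add, Finset.sum_add_distrib, ← Finset.sum_mul, sum_prod_eq_one hφ.2,
          one_mul, winProb]

theorem WeaklySP.winProb_le [Nonempty C] (hv : IsVotingRule v) (hsp : WeaklySP v)
    (hφ : IsBelief φ) (i : Fin n) {P : Pref C} (hP : P.top = x) (Q : Pref C) :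
    winProb v φ i Q x ≤ winProb v φ i P x := by
  refine le_of_forall_pos_le_add fun ε hε => ?_
  set η := min ε (1 / 2)
  have hη₀ : 0 < η := lt_min hε one_half_pos
  have hη₁ : η < 1 := (min_le_right _ _).trans_lt (by norm_num)
  subst hP
  have hux := P.geomUtility_top η
  calc winProb v φ i Q P.top ≤ EU v (P.geomUtility η) φ i Q :=
        winProb_le_EU hv hφ hux (fun y => (P.utility01_geomUtility hη₀.le hη₁.le y).1) i Q
    _ ≤ EU v (P.geomUtility η) φ i P :=
        hsp i P Q φ (Set.mem_univ φ) hφ _ (P.utility01_geomUtility hη₀.le hη₁.le)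
          (P.consistentOn_geomUtility hη₀ hη₁)
    _ ≤ winProb v φ i P P.top + η :=
        EU_le_winProb_add hv hφ hη₀.le hux
          (fun _ hy => P.geomUtility_le hη₀.le hη₁.le hy.symm) i P
    _ ≤ winProb v φ i P P.top + ε := by gcongr; exact min_le_left _ _

end WinProb

section Symmetric

open MvPolynomial

variable {ι α : Type*} [Fintype ι]

noncomputable def fiberCount (R : ι → α) : α →₀ ℕ :=
  ∑ j, Finsupp.single (R j) 1

theorem exists_perm_comp_eq_of_fiberCount_eq [DecidableEq α] {R R' : ι → α}
    (h : fiberCount R = fiberCount R') : ∃ σ : Equiv.Perm ι, R' ∘ σ = R := by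
  have hcard : ∀ a, Fintype.card {j // R j = a} = Fintype.card {j // R' j = a} := by
    intro a
    simpa [fiberCount, Finsupp.finsetSum_apply, Finsupp.single_apply, Fintype.card_subtype,
      Finset.sum_boole, eq_comm] using congrArg (· a) h
  exact ⟨Equiv.ofFiberEquiv fun a => Fintype.equivOfCardEq (hcard a),
    funext (Equiv.ofFiberEquiv_map _)⟩

theorem eval_monomial_fiberCount (x : α → ℝ) (R : ι → α) (a : ℝ) :
    eval x (monomial (fiberCount R) a) = a * ∏ j, x (R j) := by
  simp [fiberCount, monomial_sum_index, eval_monomial]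

theorem eq_zero_of_forall_sum_prod_mul_eq_zero [DecidableEq ι] [Fintype α] [Nonempty α]
    {c : (ι → α) → ℝ} (hc : ∀ (σ : Equiv.Perm ι) R, c (R ∘ σ) = c R)
    (h : ∀ φ : α → ℝ, (∀ a, 0 ≤ φ a) → ∑ a, φ a = 1 → ∑ R, (∏ j, φ (R j)) * c R = 0)
    (R : ι → α) : c R = 0 := by
  classical
  set F : MvPolynomial α ℝ := ∑ R, monomial (fiberCount R) (c R)
  have hF : F = 0 := by
    refine funext_set (fun _ => Set.Ioi 0) (fun _ => Set.Ioi_infinite 0) fun x hx => ?_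
    replace hx : ∀ a, 0 < x a := fun a => hx a (Set.mem_univ a)
    set s := ∑ a, x a
    have hs : 0 < s := Finset.sum_pos (fun a _ => hx a) Finset.univ_nonempty
    have hφ := h (fun a => x a / s) (fun a => (div_pos (hx a) hs).le)
      (by rw [← Finset.sum_div, div_self hs.ne'])
    calc eval x F = ∑ R, (∏ j, x (R j)) * c R := by
          simp only [F, map_sum, eval_monomial_fiberCount, mul_comm]
      _ = s ^ Fintype.card ι * ∑ R, (∏ j, x (R j) / s) * c R := by
          rw [Finset.mul_sum]
          refine Finset.sum_congr rfl fun R _ => ?_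
          rw [Finset.prod_div_distrib, Finset.prod_const, Finset.card_univ]
          field_simp
      _ = eval x 0 := by rw [hφ, mul_zero, map_zero]
  have hcoeff := congrArg (coeff (fiberCount R)) hF
  simp only [F, coeff_sum, coeff_monomial, coeff_zero] at hcoeff
  rw [← Finset.sum_filter] at hcoeff
  have hfiber : ∀ R' ∈ Finset.univ.filter (fiberCount · = fiberCount R), c R' = c R := by
    intro R' hR'
    obtain ⟨σ, rfl⟩ := exists_perm_comp_eq_of_fiberCount_eq (Finset.mem_filter.1 hR').2
    exact hc σ R
  rw [Finset.sum_congr rfl hfiber, Finset.sum_const, nsmul_eq_mul] at hcoeff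
  refine (mul_eq_zero.1 hcoeff).resolve_left ?_
  exact Nat.cast_ne_zero.2 (Finset.card_ne_zero.2 ⟨R, by simp⟩)

end Symmetric

section Anonymity

variable {C : Type} [DecidableEq C] {A : Finset C} {n : ℕ}

theorem combine_self (i : Fin n) (P : Fin n → PrefOn C A) :
    combine i (P i) (fun j => P j) = P := by
  funext j
  by_cases hj : j = i
  · subst hj; exact dif_pos rfl
  · exact dif_neg hj

theorem combine_eq_update (i : Fin n) (Q : PrefOn C A) (P : Fin n → PrefOn C A) :
    combine i Q (fun j => P j) = Function.update P i Q := by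
  funext j
  by_cases hj : j = i
  · subst hj; simp [combine]
  · simp [combine, hj]

theorem Anonymous.apply_combine_comp {v : (Fin n → PrefOn C A) → C → ℝ} (hanon : Anonymous v)
    (i : Fin n) (Q : PrefOn C A) (R : {j : Fin n // j ≠ i} → PrefOn C A)
    (σ : Equiv.Perm {j : Fin n // j ≠ i}) : v (combine i Q (R ∘ σ)) = v (combine i Q R) := by
  rw [← hanon (Equiv.Perm.ofSubtype σ) (combine i Q R)]
  congr 1
  funext j
  by_cases hj : j = i
  · subst hj
    simp [combine, Equiv.Perm.ofSubtype_apply_of_not_mem σ (not_not.2 rfl)]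
  · simp [combine, hj, Equiv.Perm.ofSubtype_apply_of_mem σ hj, (σ ⟨j, hj⟩).2]

end Anonymity

section Unanimity

variable {C : Type} [Fintype C] [DecidableEq C] [Nonempty C] {n : ℕ}
  {v : (Fin n → Pref C) → C → ℝ}

theorem apply_combine_eq_of_top_eq (hv : IsVotingRule v) (hanon : Anonymous v)
    (hsp : WeaklySP v) (i : Fin n) {x : C} {P Q : Pref C} (hP : P.top = x) (hQ : Q.top = x)
    (R : {j : Fin n // j ≠ i} → Pref C) : v (combine i P R) x = v (combine i Q R) x := by
  refine sub_eq_zero.1 (eq_zero_of_forall_sum_prod_mul_eq_zero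
    (c := fun R => v (combine i P R) x - v (combine i Q R) x) ?_ ?_ R)
  · intro σ R'
    simp only [hanon.apply_combine_comp]
  · intro φ hφ₀ hφ₁
    have hφ : IsBelief φ := ⟨hφ₀, hφ₁⟩
    have hPQ := le_antisymm (hsp.winProb_le hv hφ i hQ P) (hsp.winProb_le hv hφ i hP Q)
    simp only [mul_sub, Finset.sum_sub_distrib]
    exact sub_eq_zero.2 hPQ

theorem apply_update_eq_of_top_eq (hv : IsVotingRule v) (hanon : Anonymous v)
    (hsp : WeaklySP v) (P : Fin n → Pref C) (i : Fin n) {x : C} (hP : (P i).top = x)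
    {Q : Pref C} (hQ : Q.top = x) : v (Function.update P i Q) x = v P x := by
  rw [← combine_eq_update, apply_combine_eq_of_top_eq hv hanon hsp i hQ hP, combine_self]

theorem apply_eq_of_forall_top_eq (hv : IsVotingRule v) (hanon : Anonymous v)
    (hsp : WeaklySP v) {x : C} {P Q : Fin n → Pref C} (hP : ∀ i, (P i).top = x)
    (hQ : ∀ i, (Q i).top = x) : v Q x = v P x := by
  suffices ∀ s : Finset (Fin n), v (s.piecewise Q P) x = v P x by
    simpa using this Finset.univ
  intro s
  induction s using Finset.induction_on with
  | empty => simp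
  | insert a s _ ih =>
    rw [Finset.piecewise_insert, apply_update_eq_of_top_eq hv hanon hsp _ a _ (hQ a), ih]
    by_cases ha : a ∈ s <;> simp [Finset.piecewise, ha, hP, hQ]

end Unanimity

/-- An anonymous, weakly strategy-proof voting rule satisfying
`ε`-super-weak unanimity satisfies `ε`-strong unanimity. -/
theorem stmt2 {C : Type} [Fintype C] [DecidableEq C] [Nonempty C] {n : ℕ}
    (v : (Fin n → Pref C) → C → ℝ) (ε : ℝ) (hv : IsVotingRule v) (hanon : Anonymous v)
    (hsp : WeaklySP v) (hswu : SuperWeakUnanimity v ε) :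
    StrongUnanimity v ε := by
  intro x P hP
  obtain ⟨Q, hQ, hQx⟩ := hswu x
  rwa [apply_eq_of_forall_top_eq hv hanon hsp hP hQ] at hQx
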